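/- arXiv:1902.00221 — 2 statements merged into one kernel-verified Lean document; each statement's English description precedes it below -/
import Mathlib

section
/- The scalar prefactor γ(Δt, ξ) = (1 − i Δt (ū·ξ))/(1 + Δt² ρ̄ λ |ξ|²) in the amplification matrix satisfies |γ(Δt,ξ)| ≤ 1 whenever (ū·ξ)² ≤ ρ̄ λ |ξ|² · (2 + Δt² ρ̄ λ |ξ|²); in particular, if |ū|² ≤ 2 ρ̄ λ then |γ(Δt,ξ)| ≤ 1 for all Δt ≥ 0 and ξ ∈ ℝ². -/
/-! The bound |(1 - i Δt s)/(1 + a)|² ≤ 1, with s = ū·ξ and a = Δt² ρ̄ λ |ξ|², is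
`1 + Δt² s² ≤ 1 + 2a + a²`, i.e. `Δt² s² ≤ a (2 + a)`, which is the assumed bound on `s²` multiplied by Δt².
For the second claim, Cauchy–Schwarz gives `s² ≤ |ū|² |ξ|² ≤ 2 ρ̄ λ |ξ|²`, and the extra term
`Δt² (ρ̄ λ |ξ|²)²` is nonnegative. -/

open Complex

/-- The scalar prefactor γ(Δt, ξ) of the amplification matrix. -/
noncomputable def gammaFac (ρb lam : ℝ) (ub : Fin 2 → ℝ) (dt : ℝ) (ξ : Fin 2 → ℝ) : ℂ :=
  ((1 : ℂ) - I * dt * (ub 0 * ξ 0 + ub 1 * ξ 1)) /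
    (1 + dt^2 * ρb * lam * ((ξ 0)^2 + (ξ 1)^2))

theorem Complex.norm_div_ofReal_le_one {z : ℂ} {D : ℝ} (h : ‖z‖ ^ 2 ≤ D ^ 2) :
    ‖z / D‖ ≤ 1 := by
  rcases eq_or_ne D 0 with rfl | hD
  · simp
  rw [norm_div, norm_real, Real.norm_eq_abs, div_le_one (abs_pos.mpr hD)]
  simpa using sq_le_sq.mp h

theorem Complex.sq_norm_one_sub_I_mul_ofReal (x : ℝ) : ‖1 - I * x‖ ^ 2 = 1 + x ^ 2 := by
  rw [Complex.sq_norm, normSq_apply]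
  simp only [sub_re, one_re, mul_re, I_re, ofReal_re, I_im, ofReal_im, sub_im, one_im, mul_im]
  ring

theorem sq_mul_add_mul_le (a b c d : ℝ) : (a * b + c * d) ^ 2 ≤ (a ^ 2 + c ^ 2) * (b ^ 2 + d ^ 2) := by
  nlinarith [sq_nonneg (a * d - c * b)]

theorem norm_gammaFac_le_one {ρb lam dt : ℝ} {ub ξ : Fin 2 → ℝ}
    (h : (ub 0 * ξ 0 + ub 1 * ξ 1) ^ 2
      ≤ ρb * lam * ((ξ 0) ^ 2 + (ξ 1) ^ 2) * (2 + dt ^ 2 * ρb * lam * ((ξ 0) ^ 2 + (ξ 1) ^ 2))) :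
    ‖gammaFac ρb lam ub dt ξ‖ ≤ 1 := by
  set s := ub 0 * ξ 0 + ub 1 * ξ 1
  set a := dt ^ 2 * ρb * lam * ((ξ 0) ^ 2 + (ξ 1) ^ 2)
  have hγ : gammaFac ρb lam ub dt ξ = (1 - I * ↑(dt * s)) / ↑(1 + a) := by
    simp only [gammaFac, s, a]
    push_cast
    ring
  have hdt : dt ^ 2 * s ^ 2 ≤ a * (2 + a) := by
    calc dt ^ 2 * s ^ 2
        ≤ dt ^ 2 * (ρb * lam * ((ξ 0) ^ 2 + (ξ 1) ^ 2) * (2 + a)) :=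
          mul_le_mul_of_nonneg_left h (sq_nonneg dt)
      _ = a * (2 + a) := by ring
  rw [hγ]
  apply Complex.norm_div_ofReal_le_one
  rw [Complex.sq_norm_one_sub_I_mul_ofReal]
  nlinarith

theorem sq_dot_le_of_sq_le_two_mul {ρb lam dt : ℝ} {ub : Fin 2 → ℝ}
    (hub : (ub 0) ^ 2 + (ub 1) ^ 2 ≤ 2 * ρb * lam) (ξ : Fin 2 → ℝ) :
    (ub 0 * ξ 0 + ub 1 * ξ 1) ^ 2
      ≤ ρb * lam * ((ξ 0) ^ 2 + (ξ 1) ^ 2) * (2 + dt ^ 2 * ρb * lam * ((ξ 0) ^ 2 + (ξ 1) ^ 2)) := by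
  set q := (ξ 0) ^ 2 + (ξ 1) ^ 2
  have hq : 0 ≤ q := by positivity
  calc (ub 0 * ξ 0 + ub 1 * ξ 1) ^ 2
      ≤ ((ub 0) ^ 2 + (ub 1) ^ 2) * q := sq_mul_add_mul_le _ _ _ _
    _ ≤ 2 * ρb * lam * q := mul_le_mul_of_nonneg_right hub hq
    _ ≤ 2 * ρb * lam * q + dt ^ 2 * (ρb * lam * q) ^ 2 := by
        linarith [mul_nonneg (sq_nonneg dt) (sq_nonneg (ρb * lam * q))]
    _ = ρb * lam * q * (2 + dt ^ 2 * ρb * lam * q) := by ring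

theorem stmt8_general (ρb lam : ℝ) (ub : Fin 2 → ℝ) :
    (∀ dt : ℝ, 0 ≤ dt → ∀ ξ : Fin 2 → ℝ,
      (ub 0 * ξ 0 + ub 1 * ξ 1)^2
          ≤ ρb * lam * ((ξ 0)^2 + (ξ 1)^2) * (2 + dt^2 * ρb * lam * ((ξ 0)^2 + (ξ 1)^2)) →
        ‖gammaFac ρb lam ub dt ξ‖ ≤ 1) ∧
    ((ub 0)^2 + (ub 1)^2 ≤ 2 * ρb * lam →
      ∀ dt : ℝ, 0 ≤ dt → ∀ ξ : Fin 2 → ℝ, ‖gammaFac ρb lam ub dt ξ‖ ≤ 1) :=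
  ⟨fun _ _ _ h => norm_gammaFac_le_one h,
    fun hub _ _ ξ => norm_gammaFac_le_one (sq_dot_le_of_sq_le_two_mul hub ξ)⟩

/-- |γ(Δt,ξ)| ≤ 1 whenever (ū·ξ)² ≤ ρ̄ λ |ξ|² (2 + Δt² ρ̄ λ |ξ|²); in particular,
if |ū|² ≤ 2 ρ̄ λ then |γ(Δt,ξ)| ≤ 1 for all Δt ≥ 0 and ξ. -/
theorem stmt8 (ρb lam : ℝ) (hρb : 0 < ρb) (hlam : 0 < lam) (ub : Fin 2 → ℝ) :
    (∀ dt : ℝ, 0 ≤ dt → ∀ ξ : Fin 2 → ℝ,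
      (ub 0 * ξ 0 + ub 1 * ξ 1)^2
          ≤ ρb * lam * ((ξ 0)^2 + (ξ 1)^2) * (2 + dt^2 * ρb * lam * ((ξ 0)^2 + (ξ 1)^2)) →
        ‖gammaFac ρb lam ub dt ξ‖ ≤ 1) ∧
    ((ub 0)^2 + (ub 1)^2 ≤ 2 * ρb * lam →
      ∀ dt : ℝ, 0 ≤ dt → ∀ ξ : Fin 2 → ℝ, ‖gammaFac ρb lam ub dt ξ‖ ≤ 1) :=
  stmt8_general ρb lam ub
end

section
/- The semi-discrete scheme for the Boussinesq limit is asymptotically consistent: if the expansion coefficients of (ρ^{n}, u^{n}) satisfy the semi-discrete Euler scheme with α = 1 for all small ε, with ρ₀ ≡ 1 constant in space and time, then the leading-order velocity satisfies the discrete Boussinesq momentum equation (u₀^{n+1} − u₀^n)/Δt + ∇·(u₀^n ⊗ u₀^n) + ∇p₂^{n+1} = −ρ₁^{n+1} e₃ together with ∇·u₀^{n+1} = 0. -/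
open Filter Topology

/-- Partial derivative in the i-th coordinate direction. -/
noncomputable def pd (i : Fin 3) (f : (Fin 3 → ℝ) → ℝ) (x : Fin 3 → ℝ) : ℝ :=
  fderiv ℝ f x (Pi.single i 1)

lemma pd_expand5 (i : Fin 3) (x : Fin 3 → ℝ) (ε : ℝ)
    (f0 f1 f2 f3 f4 : (Fin 3 → ℝ) → ℝ)
    (h0 : DifferentiableAt ℝ f0 x) (h1 : DifferentiableAt ℝ f1 x)
    (h2 : DifferentiableAt ℝ f2 x) (h3 : DifferentiableAt ℝ f3 x)
    (h4 : DifferentiableAt ℝ f4 x) :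
    pd i (fun y => f0 y + ε * f1 y + ε^2 * f2 y + ε^3 * f3 y + ε^4 * f4 y) x
      = pd i f0 x + ε * pd i f1 x + ε^2 * pd i f2 x + ε^3 * pd i f3 x + ε^4 * pd i f4 x := by
  have H : HasFDerivAt (fun y => f0 y + ε * f1 y + ε^2 * f2 y + ε^3 * f3 y + ε^4 * f4 y)
      (fderiv ℝ f0 x + ε • fderiv ℝ f1 x + ε^2 • fderiv ℝ f2 x + ε^3 • fderiv ℝ f3 x
        + ε^4 • fderiv ℝ f4 x) x :=
    (((h0.hasFDerivAt.add (h1.hasFDerivAt.const_mul ε)).add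
      (h2.hasFDerivAt.const_mul (ε^2))).add (h3.hasFDerivAt.const_mul (ε^3))).add
      (h4.hasFDerivAt.const_mul (ε^4))
  simp [pd, H.fderiv]

lemma pd_expand4 (i : Fin 3) (x : Fin 3 → ℝ) (ε : ℝ)
    (f0 f1 f2 f3 : (Fin 3 → ℝ) → ℝ)
    (h0 : DifferentiableAt ℝ f0 x) (h1 : DifferentiableAt ℝ f1 x)
    (h2 : DifferentiableAt ℝ f2 x) (h3 : DifferentiableAt ℝ f3 x) :
    pd i (fun y => f0 y + ε * f1 y + ε^2 * f2 y + ε^3 * f3 y) x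
      = pd i f0 x + ε * pd i f1 x + ε^2 * pd i f2 x + ε^3 * pd i f3 x := by
  have H : HasFDerivAt (fun y => f0 y + ε * f1 y + ε^2 * f2 y + ε^3 * f3 y)
      (fderiv ℝ f0 x + ε • fderiv ℝ f1 x + ε^2 • fderiv ℝ f2 x + ε^3 • fderiv ℝ f3 x) x :=
    ((h0.hasFDerivAt.add (h1.hasFDerivAt.const_mul ε)).add
      (h2.hasFDerivAt.const_mul (ε^2))).add (h3.hasFDerivAt.const_mul (ε^3))
  simp [pd, H.fderiv]

lemma pd_aff (i : Fin 3) (x : Fin 3 → ℝ) (ε : ℝ)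
    (f1 f2 : (Fin 3 → ℝ) → ℝ)
    (h1 : DifferentiableAt ℝ f1 x) (h2 : DifferentiableAt ℝ f2 x) :
    pd i (fun y => 1 + ε * f1 y + ε^2 * f2 y) x
      = ε * pd i f1 x + ε^2 * pd i f2 x := by
  have H : HasFDerivAt (fun y => (1:ℝ) + ε * f1 y + ε^2 * f2 y)
      ((0 : (Fin 3 → ℝ) →L[ℝ] ℝ) + ε • fderiv ℝ f1 x + ε^2 • fderiv ℝ f2 x) x :=
    ((hasFDerivAt_const 1 x).add (h1.hasFDerivAt.const_mul ε)).add
      (h2.hasFDerivAt.const_mul (ε^2))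
  simp [pd, H.fderiv]

lemma pd_rpow (i : Fin 3) (x : Fin 3 → ℝ) (f : (Fin 3 → ℝ) → ℝ) (γ : ℝ)
    (hf : DifferentiableAt ℝ f x) (hx : f x ≠ 0) :
    pd i (fun y => f y ^ γ) x = γ * f x ^ (γ - 1) * pd i f x := by
  have h1 : HasDerivAt (fun t : ℝ => t ^ γ) (γ * f x ^ (γ - 1)) (f x) :=
    Real.hasDerivAt_rpow_const (Or.inl hx)
  have h2 : HasFDerivAt (fun y => f y ^ γ) ((γ * f x ^ (γ - 1)) • fderiv ℝ f x) x :=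
    h1.comp_hasFDerivAt x hf.hasFDerivAt
  simp [pd, h2.fderiv, mul_assoc]

lemma pd_press (i : Fin 3) (x : Fin 3 → ℝ) (c d : ℝ) (f g : (Fin 3 → ℝ) → ℝ)
    (hf : DifferentiableAt ℝ f x) (hg : DifferentiableAt ℝ g x) :
    pd i (fun y => c * g y + d * (f y * f y)) x
      = c * pd i g x + d * (2 * f x * pd i f x) := by
  have H : HasFDerivAt (fun y => c * g y + d * (f y * f y))
      (c • fderiv ℝ g x + d • (f x • fderiv ℝ f x + f x • fderiv ℝ f x)) x :=
    (hg.hasFDerivAt.const_mul c).add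
      ((hf.hasFDerivAt.mul hf.hasFDerivAt).const_mul d)
  simp [pd, H.fderiv]
  ring

set_option maxHeartbeats 1000000

/-- Asymptotic consistency of the semi-discrete scheme with the Boussinesq limit (α = 1):
if the composite expanded fields, with ρ₀ ≡ 1, satisfy the semi-discrete Euler scheme with
P(ρ) = ρ^γ for all small ε > 0, then the leading-order velocity satisfies the discrete
Boussinesq momentum equation with pressure p₂^{n+1} = γρ₂^{n+1} + γ(γ−1)/2 (ρ₁^{n+1})²
and the divergence constraint ∇·u₀^{n+1} = 0. -/
theorem stmt18 (Δt γ ε₀ : ℝ) (hΔt : 0 < Δt) (hγ : 0 < γ) (hε₀ : 0 < ε₀)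
    (ρ1n ρ1n1 ρ2n ρ2n1 : (Fin 3 → ℝ) → ℝ)
    (u0n u0n1 u1n u1n1 : (Fin 3 → ℝ) → (Fin 3 → ℝ))
    (hρ1n : ContDiff ℝ (⊤ : ℕ∞) ρ1n) (hρ1n1 : ContDiff ℝ (⊤ : ℕ∞) ρ1n1)
    (hρ2n : ContDiff ℝ (⊤ : ℕ∞) ρ2n) (hρ2n1 : ContDiff ℝ (⊤ : ℕ∞) ρ2n1)
    (hu0n : ContDiff ℝ (⊤ : ℕ∞) u0n) (hu0n1 : ContDiff ℝ (⊤ : ℕ∞) u0n1)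
    (hu1n : ContDiff ℝ (⊤ : ℕ∞) u1n) (hu1n1 : ContDiff ℝ (⊤ : ℕ∞) u1n1)
    (hmass : ∀ ε ∈ Set.Ioo (0:ℝ) ε₀, ∀ x : Fin 3 → ℝ,
      ((1 + ε * ρ1n1 x + ε^2 * ρ2n1 x) - (1 + ε * ρ1n x + ε^2 * ρ2n x)) / Δt
        + (∑ i, pd i (fun y => (1 + ε * ρ1n1 y + ε^2 * ρ2n1 y)
            * (u0n1 y i + ε * u1n1 y i)) x) = 0)
    (hmom : ∀ ε ∈ Set.Ioo (0:ℝ) ε₀, ∀ (x : Fin 3 → ℝ) (i : Fin 3),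
      ((1 + ε * ρ1n1 x + ε^2 * ρ2n1 x) * (u0n1 x i + ε * u1n1 x i)
          - (1 + ε * ρ1n x + ε^2 * ρ2n x) * (u0n x i + ε * u1n x i)) / Δt
        + (∑ j, pd j (fun y => (1 + ε * ρ1n y + ε^2 * ρ2n y)
            * (u0n y i + ε * u1n y i) * (u0n y j + ε * u1n y j)) x)
        + (1 / ε^2) * pd i (fun y => (1 + ε * ρ1n1 y + ε^2 * ρ2n1 y) ^ γ) x
      = -(1 / ε) * (1 + ε * ρ1n1 x + ε^2 * ρ2n1 x) * (if i = 2 then 1 else 0)) :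
    (∀ (x : Fin 3 → ℝ) (i : Fin 3),
      (u0n1 x i - u0n x i) / Δt
        + (∑ j, pd j (fun y => u0n y i * u0n y j) x)
        + pd i (fun y => γ * ρ2n1 y + γ * (γ - 1) / 2 * (ρ1n1 y)^2) x
      = -ρ1n1 x * (if i = 2 then 1 else 0)) ∧
    (∀ x : Fin 3 → ℝ, (∑ i, pd i (fun y => u0n1 y i) x) = 0) := by
  have hlne : (𝓝[Set.Ioo (0:ℝ) ε₀] (0:ℝ)).NeBot :=
    mem_closure_iff_nhdsWithin_neBot.mp (by
      rw [closure_Ioo hε₀.ne]; exact ⟨le_rfl, hε₀.le⟩)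
  have hl_nhds : (𝓝[Set.Ioo (0:ℝ) ε₀] (0:ℝ)) ≤ 𝓝 0 := nhdsWithin_le_nhds
  have hl_ne : (𝓝[Set.Ioo (0:ℝ) ε₀] (0:ℝ)) ≤ 𝓝[≠] (0:ℝ) :=
    nhdsWithin_mono _ (fun t ht => ht.1.ne')
  have dρ1n : Differentiable ℝ ρ1n := hρ1n.differentiable (by simp)
  have dρ1n1 : Differentiable ℝ ρ1n1 := hρ1n1.differentiable (by simp)
  have dρ2n : Differentiable ℝ ρ2n := hρ2n.differentiable (by simp)
  have dρ2n1 : Differentiable ℝ ρ2n1 := hρ2n1.differentiable (by simp)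
  have du0n : Differentiable ℝ u0n := hu0n.differentiable (by simp)
  have du0n1 : Differentiable ℝ u0n1 := hu0n1.differentiable (by simp)
  have du1n : Differentiable ℝ u1n := hu1n.differentiable (by simp)
  have du1n1 : Differentiable ℝ u1n1 := hu1n1.differentiable (by simp)
  -- decomposition of the momentum flux sum
  have hSmom : ∀ (x : Fin 3 → ℝ) (i : Fin 3), ∃ C1 C2 C3 C4 : ℝ, ∀ ε : ℝ,
      (∑ j, pd j (fun y => (1 + ε * ρ1n y + ε^2 * ρ2n y)
          * (u0n y i + ε * u1n y i) * (u0n y j + ε * u1n y j)) x)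
        = (∑ j, pd j (fun y => u0n y i * u0n y j) x)
          + ε * C1 + ε^2 * C2 + ε^3 * C3 + ε^4 * C4 := by
    intro x i
    refine ⟨∑ j, pd j (fun y => ρ1n y * (u0n y i * u0n y j)
        + (u1n y i * u0n y j + u0n y i * u1n y j)) x,
      ∑ j, pd j (fun y => ρ2n y * (u0n y i * u0n y j)
        + ρ1n y * (u1n y i * u0n y j + u0n y i * u1n y j) + u1n y i * u1n y j) x,
      ∑ j, pd j (fun y => ρ2n y * (u1n y i * u0n y j + u0n y i * u1n y j)
        + ρ1n y * (u1n y i * u1n y j)) x,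
      ∑ j, pd j (fun y => ρ2n y * (u1n y i * u1n y j)) x, fun ε => ?_⟩
    have hre : ∀ j : Fin 3,
        pd j (fun y => (1 + ε * ρ1n y + ε^2 * ρ2n y)
          * (u0n y i + ε * u1n y i) * (u0n y j + ε * u1n y j)) x
        = pd j (fun y => u0n y i * u0n y j) x
          + ε * pd j (fun y => ρ1n y * (u0n y i * u0n y j)
              + (u1n y i * u0n y j + u0n y i * u1n y j)) x
          + ε^2 * pd j (fun y => ρ2n y * (u0n y i * u0n y j)
              + ρ1n y * (u1n y i * u0n y j + u0n y i * u1n y j) + u1n y i * u1n y j) x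
          + ε^3 * pd j (fun y => ρ2n y * (u1n y i * u0n y j + u0n y i * u1n y j)
              + ρ1n y * (u1n y i * u1n y j)) x
          + ε^4 * pd j (fun y => ρ2n y * (u1n y i * u1n y j)) x := by
      intro j
      rw [show (fun y => (1 + ε * ρ1n y + ε^2 * ρ2n y)
          * (u0n y i + ε * u1n y i) * (u0n y j + ε * u1n y j))
        = (fun y => u0n y i * u0n y j
            + ε * (ρ1n y * (u0n y i * u0n y j)
              + (u1n y i * u0n y j + u0n y i * u1n y j))
            + ε^2 * (ρ2n y * (u0n y i * u0n y j)
              + ρ1n y * (u1n y i * u0n y j + u0n y i * u1n y j) + u1n y i * u1n y j)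
            + ε^3 * (ρ2n y * (u1n y i * u0n y j + u0n y i * u1n y j)
              + ρ1n y * (u1n y i * u1n y j))
            + ε^4 * (ρ2n y * (u1n y i * u1n y j))) from by funext y; ring]
      exact pd_expand5 _ _ _ _ _ _ _ _
        (by fun_prop) (by fun_prop) (by fun_prop) (by fun_prop) (by fun_prop)
    rw [Finset.sum_congr rfl fun j _ => hre j, Finset.sum_add_distrib,
      Finset.sum_add_distrib, Finset.sum_add_distrib, Finset.sum_add_distrib,
      ← Finset.mul_sum, ← Finset.mul_sum, ← Finset.mul_sum, ← Finset.mul_sum]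
  -- leading order: γ ∇ρ₁ = -e₃
  have key1 : ∀ (x : Fin 3 → ℝ) (i : Fin 3),
      γ * pd i ρ1n1 x + (if i = 2 then (1:ℝ) else 0) = 0 := by
    intro x i
    obtain ⟨C1, C2, C3, C4, hC⟩ := hSmom x i
    have hrpos : ∀ᶠ ε in 𝓝[Set.Ioo (0:ℝ) ε₀] (0:ℝ),
        (0:ℝ) < 1 + ε * ρ1n1 x + ε^2 * ρ2n1 x := by
      have hc : ContinuousAt (fun ε : ℝ => 1 + ε * ρ1n1 x + ε^2 * ρ2n1 x) 0 := by fun_prop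
      have h1 := hc.tendsto.mono_left hl_nhds
      rw [show (1:ℝ) + 0 * ρ1n1 x + 0^2 * ρ2n1 x = 1 from by ring] at h1
      exact h1.eventually (eventually_gt_nhds one_pos)
    set Φ : ℝ → ℝ := fun ε =>
      ε * (((1 + ε * ρ1n1 x + ε^2 * ρ2n1 x) * (u0n1 x i + ε * u1n1 x i)
            - (1 + ε * ρ1n x + ε^2 * ρ2n x) * (u0n x i + ε * u1n x i)) / Δt)
      + ε * ((∑ j, pd j (fun y => u0n y i * u0n y j) x)
          + ε * C1 + ε^2 * C2 + ε^3 * C3 + ε^4 * C4)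
      + γ * (1 + ε * ρ1n1 x + ε^2 * ρ2n1 x) ^ (γ - 1) * (pd i ρ1n1 x + ε * pd i ρ2n1 x)
      + (1 + ε * ρ1n1 x + ε^2 * ρ2n1 x) * (if i = 2 then (1:ℝ) else 0) with hΦdef
    have heq : ∀ᶠ ε in 𝓝[Set.Ioo (0:ℝ) ε₀] (0:ℝ), Φ ε = 0 := by
      filter_upwards [self_mem_nhdsWithin, hrpos] with ε hε hrε
      have H := hmom ε hε x i
      set δ : ℝ := (if i = 2 then (1:ℝ) else 0) with hδ
      rw [hC ε, pd_rpow i x _ γ (by fun_prop) hrε.ne',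
        pd_aff i x ε ρ1n1 ρ2n1 (by fun_prop) (by fun_prop)] at H
      have hε' : ε ≠ 0 := hε.1.ne'
      rw [hΦdef]
      apply mul_right_cancel₀ (pow_ne_zero 2 hε')
      field_simp at H ⊢
      linear_combination H
    have hKt : Tendsto (fun ε : ℝ => (1 + ε * ρ1n1 x + ε^2 * ρ2n1 x) ^ (γ - 1))
        (𝓝[Set.Ioo (0:ℝ) ε₀] (0:ℝ)) (𝓝 1) := by
      have hKc : ContinuousAt (fun ε : ℝ => (1 + ε * ρ1n1 x + ε^2 * ρ2n1 x) ^ (γ - 1)) 0 :=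
        ContinuousAt.rpow_const (by fun_prop) (Or.inl (by norm_num))
      have := hKc.tendsto.mono_left hl_nhds
      simpa [Real.one_rpow] using this
    have hT : Tendsto Φ (𝓝[Set.Ioo (0:ℝ) ε₀] (0:ℝ))
        (𝓝 (γ * pd i ρ1n1 x + (if i = 2 then (1:ℝ) else 0))) := by
      have h1 : Tendsto (fun ε : ℝ =>
          ε * (((1 + ε * ρ1n1 x + ε^2 * ρ2n1 x) * (u0n1 x i + ε * u1n1 x i)
            - (1 + ε * ρ1n x + ε^2 * ρ2n x) * (u0n x i + ε * u1n x i)) / Δt)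
          + ε * ((∑ j, pd j (fun y => u0n y i * u0n y j) x)
              + ε * C1 + ε^2 * C2 + ε^3 * C3 + ε^4 * C4))
          (𝓝[Set.Ioo (0:ℝ) ε₀] (0:ℝ)) (𝓝 0) := by
        have hc : ContinuousAt (fun ε : ℝ =>
            ε * (((1 + ε * ρ1n1 x + ε^2 * ρ2n1 x) * (u0n1 x i + ε * u1n1 x i)
              - (1 + ε * ρ1n x + ε^2 * ρ2n x) * (u0n x i + ε * u1n x i)) / Δt)
            + ε * ((∑ j, pd j (fun y => u0n y i * u0n y j) x)
                + ε * C1 + ε^2 * C2 + ε^3 * C3 + ε^4 * C4)) 0 := by fun_prop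
        have := hc.tendsto.mono_left hl_nhds
        simpa using this
      have h2 : Tendsto (fun ε : ℝ =>
          γ * (1 + ε * ρ1n1 x + ε^2 * ρ2n1 x) ^ (γ - 1) * (pd i ρ1n1 x + ε * pd i ρ2n1 x)
          + (1 + ε * ρ1n1 x + ε^2 * ρ2n1 x) * (if i = 2 then (1:ℝ) else 0))
          (𝓝[Set.Ioo (0:ℝ) ε₀] (0:ℝ))
          (𝓝 (γ * pd i ρ1n1 x + (if i = 2 then (1:ℝ) else 0))) := by
        have hr : Tendsto (fun ε : ℝ => 1 + ε * ρ1n1 x + ε^2 * ρ2n1 x)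
            (𝓝[Set.Ioo (0:ℝ) ε₀] (0:ℝ)) (𝓝 1) := by
          have hc : ContinuousAt (fun ε : ℝ => 1 + ε * ρ1n1 x + ε^2 * ρ2n1 x) 0 := by fun_prop
          have := hc.tendsto.mono_left hl_nhds
          simpa using this
        have hp : Tendsto (fun ε : ℝ => pd i ρ1n1 x + ε * pd i ρ2n1 x)
            (𝓝[Set.Ioo (0:ℝ) ε₀] (0:ℝ)) (𝓝 (pd i ρ1n1 x)) := by
          have hc : ContinuousAt (fun ε : ℝ => pd i ρ1n1 x + ε * pd i ρ2n1 x) 0 := by fun_prop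
          have := hc.tendsto.mono_left hl_nhds
          simpa using this
        have := (((tendsto_const_nhds (x := γ)).mul hKt).mul hp).add
          (hr.mul (tendsto_const_nhds (x := (if i = 2 then (1:ℝ) else 0))))
        simpa using this
      have := h1.add h2
      simpa [hΦdef, add_assoc] using this
    have hz : Tendsto Φ (𝓝[Set.Ioo (0:ℝ) ε₀] (0:ℝ)) (𝓝 0) :=
      tendsto_const_nhds.congr' (by filter_upwards [heq] with ε h; exact h.symm)
    exact tendsto_nhds_unique hT hz
  -- second order: Boussinesq momentum balance
  have key2 : ∀ (x : Fin 3 → ℝ) (i : Fin 3),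
      (u0n1 x i - u0n x i) / Δt + (∑ j, pd j (fun y => u0n y i * u0n y j) x)
        + γ * pd i ρ2n1 x + (if i = 2 then (1:ℝ) else 0) * ((2 - γ) * ρ1n1 x) = 0 := by
    intro x i
    obtain ⟨C1, C2, C3, C4, hC⟩ := hSmom x i
    have hrpos : ∀ᶠ ε in 𝓝[Set.Ioo (0:ℝ) ε₀] (0:ℝ),
        (0:ℝ) < 1 + ε * ρ1n1 x + ε^2 * ρ2n1 x := by
      have hc : ContinuousAt (fun ε : ℝ => 1 + ε * ρ1n1 x + ε^2 * ρ2n1 x) 0 := by fun_prop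
      have h1 := hc.tendsto.mono_left hl_nhds
      rw [show (1:ℝ) + 0 * ρ1n1 x + 0^2 * ρ2n1 x = 1 from by ring] at h1
      exact h1.eventually (eventually_gt_nhds one_pos)
    set Ψ : ℝ → ℝ := fun ε =>
      (((1 + ε * ρ1n1 x + ε^2 * ρ2n1 x) * (u0n1 x i + ε * u1n1 x i)
            - (1 + ε * ρ1n x + ε^2 * ρ2n x) * (u0n x i + ε * u1n x i)) / Δt
        + ((∑ j, pd j (fun y => u0n y i * u0n y j) x)
            + ε * C1 + ε^2 * C2 + ε^3 * C3 + ε^4 * C4))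
      + (γ * (1 + ε * ρ1n1 x + ε^2 * ρ2n1 x) ^ (γ - 1) * pd i ρ2n1 x
        + (if i = 2 then (1:ℝ) else 0)
          * (((1 + ε * ρ1n1 x + ε^2 * ρ2n1 x)
              - (1 + ε * ρ1n1 x + ε^2 * ρ2n1 x) ^ (γ - 1)) / ε)) with hΨdef
    have heq : ∀ᶠ ε in 𝓝[Set.Ioo (0:ℝ) ε₀] (0:ℝ), Ψ ε = 0 := by
      filter_upwards [self_mem_nhdsWithin, hrpos] with ε hε hrε
      have H := hmom ε hε x i
      have hk := key1 x i
      set δ : ℝ := (if i = 2 then (1:ℝ) else 0) with hδ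
      rw [hC ε, pd_rpow i x _ γ (by fun_prop) hrε.ne',
        pd_aff i x ε ρ1n1 ρ2n1 (by fun_prop) (by fun_prop)] at H
      have hε' : ε ≠ 0 := hε.1.ne'
      rw [hΨdef]
      apply mul_right_cancel₀ (pow_ne_zero 3 hε')
      field_simp at H ⊢
      linear_combination H
        - (1 + ε * ρ1n1 x + ε^2 * ρ2n1 x) ^ (γ - 1) * Δt * hk
    have hKt : Tendsto (fun ε : ℝ => (1 + ε * ρ1n1 x + ε^2 * ρ2n1 x) ^ (γ - 1))
        (𝓝[Set.Ioo (0:ℝ) ε₀] (0:ℝ)) (𝓝 1) := by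
      have hKc : ContinuousAt (fun ε : ℝ => (1 + ε * ρ1n1 x + ε^2 * ρ2n1 x) ^ (γ - 1)) 0 :=
        ContinuousAt.rpow_const (by fun_prop) (Or.inl (by norm_num))
      have := hKc.tendsto.mono_left hl_nhds
      simpa [Real.one_rpow] using this
    have hd : HasDerivAt (fun ε : ℝ => (1 + ε * ρ1n1 x + ε^2 * ρ2n1 x)
        - (1 + ε * ρ1n1 x + ε^2 * ρ2n1 x) ^ (γ - 1)) ((2 - γ) * ρ1n1 x) 0 := by
      have h1 : HasDerivAt (fun ε : ℝ => 1 + ε * ρ1n1 x + ε^2 * ρ2n1 x)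
          (0 + 1 * ρ1n1 x + ((2:ℕ) * 0 ^ (2-1)) * ρ2n1 x) 0 :=
        ((hasDerivAt_const 0 1).add ((hasDerivAt_id 0).mul_const (ρ1n1 x))).add
          ((hasDerivAt_pow 2 0).mul_const (ρ2n1 x))
      have h2 : HasDerivAt (fun t : ℝ => t ^ (γ - 1))
          ((γ - 1) * ((1:ℝ) + 0 * ρ1n1 x + 0^2 * ρ2n1 x) ^ (γ - 1 - 1))
          ((1:ℝ) + 0 * ρ1n1 x + 0^2 * ρ2n1 x) :=
        Real.hasDerivAt_rpow_const (Or.inl (by norm_num))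
      have h3 := h2.comp 0 h1
      have h4 := h1.sub h3
      refine h4.congr_deriv ?_
      norm_num [Real.one_rpow]
      ring
    have ht4 : Tendsto (fun ε : ℝ => ((1 + ε * ρ1n1 x + ε^2 * ρ2n1 x)
        - (1 + ε * ρ1n1 x + ε^2 * ρ2n1 x) ^ (γ - 1)) / ε)
        (𝓝[Set.Ioo (0:ℝ) ε₀] (0:ℝ)) (𝓝 ((2 - γ) * ρ1n1 x)) := by
      have hs := hasDerivAt_iff_tendsto_slope.mp hd
      refine (hs.mono_left hl_ne).congr' ?_
      filter_upwards [self_mem_nhdsWithin] with ε hε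
      rw [slope_def_field]
      norm_num [Real.one_rpow]
    have hT : Tendsto Ψ (𝓝[Set.Ioo (0:ℝ) ε₀] (0:ℝ))
        (𝓝 ((u0n1 x i - u0n x i) / Δt + (∑ j, pd j (fun y => u0n y i * u0n y j) x)
          + γ * pd i ρ2n1 x + (if i = 2 then (1:ℝ) else 0) * ((2 - γ) * ρ1n1 x))) := by
      have h1 : Tendsto (fun ε : ℝ =>
          ((1 + ε * ρ1n1 x + ε^2 * ρ2n1 x) * (u0n1 x i + ε * u1n1 x i)
            - (1 + ε * ρ1n x + ε^2 * ρ2n x) * (u0n x i + ε * u1n x i)) / Δt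
          + ((∑ j, pd j (fun y => u0n y i * u0n y j) x)
              + ε * C1 + ε^2 * C2 + ε^3 * C3 + ε^4 * C4))
          (𝓝[Set.Ioo (0:ℝ) ε₀] (0:ℝ))
          (𝓝 ((u0n1 x i - u0n x i) / Δt + (∑ j, pd j (fun y => u0n y i * u0n y j) x))) := by
        have hc : ContinuousAt (fun ε : ℝ =>
            ((1 + ε * ρ1n1 x + ε^2 * ρ2n1 x) * (u0n1 x i + ε * u1n1 x i)
              - (1 + ε * ρ1n x + ε^2 * ρ2n x) * (u0n x i + ε * u1n x i)) / Δt
            + ((∑ j, pd j (fun y => u0n y i * u0n y j) x)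
                + ε * C1 + ε^2 * C2 + ε^3 * C3 + ε^4 * C4)) 0 := by fun_prop
        have := hc.tendsto.mono_left hl_nhds
        simpa using this
      have h2 : Tendsto (fun ε : ℝ =>
          γ * (1 + ε * ρ1n1 x + ε^2 * ρ2n1 x) ^ (γ - 1) * pd i ρ2n1 x
          + (if i = 2 then (1:ℝ) else 0)
            * (((1 + ε * ρ1n1 x + ε^2 * ρ2n1 x)
                - (1 + ε * ρ1n1 x + ε^2 * ρ2n1 x) ^ (γ - 1)) / ε))
          (𝓝[Set.Ioo (0:ℝ) ε₀] (0:ℝ))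
          (𝓝 (γ * pd i ρ2n1 x + (if i = 2 then (1:ℝ) else 0) * ((2 - γ) * ρ1n1 x))) := by
        have := (((tendsto_const_nhds (x := γ)).mul hKt).mul
            (tendsto_const_nhds (x := pd i ρ2n1 x))).add
          ((tendsto_const_nhds (x := (if i = 2 then (1:ℝ) else 0))).mul ht4)
        simpa using this
      have := h1.add h2
      simpa [hΨdef, add_assoc] using this
    have hz : Tendsto Ψ (𝓝[Set.Ioo (0:ℝ) ε₀] (0:ℝ)) (𝓝 0) :=
      tendsto_const_nhds.congr' (by filter_upwards [heq] with ε h; exact h.symm)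
    exact tendsto_nhds_unique hT hz
  constructor
  · intro x i
    have h2 := key2 x i
    have h1 := key1 x i
    have hp : pd i (fun y => γ * ρ2n1 y + γ * (γ - 1) / 2 * (ρ1n1 y)^2) x
        = γ * pd i ρ2n1 x + γ * (γ - 1) / 2 * (2 * ρ1n1 x * pd i ρ1n1 x) := by
      rw [show (fun y => γ * ρ2n1 y + γ * (γ - 1) / 2 * (ρ1n1 y)^2)
          = (fun y => γ * ρ2n1 y + γ * (γ - 1) / 2 * (ρ1n1 y * ρ1n1 y)) from by
        funext y; ring]
      exact pd_press i x γ (γ * (γ - 1) / 2) ρ1n1 ρ2n1 (by fun_prop) (by fun_prop)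
    rw [hp]
    linear_combination h2 + (γ - 1) * ρ1n1 x * h1
  · intro x
    obtain ⟨D1, D2, D3, hD⟩ : ∃ D1 D2 D3 : ℝ, ∀ ε : ℝ,
        (∑ i, pd i (fun y => (1 + ε * ρ1n1 y + ε^2 * ρ2n1 y)
            * (u0n1 y i + ε * u1n1 y i)) x)
          = (∑ i, pd i (fun y => u0n1 y i) x) + ε * D1 + ε^2 * D2 + ε^3 * D3 := by
      refine ⟨∑ i, pd i (fun y => ρ1n1 y * u0n1 y i + u1n1 y i) x,
        ∑ i, pd i (fun y => ρ2n1 y * u0n1 y i + ρ1n1 y * u1n1 y i) x,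
        ∑ i, pd i (fun y => ρ2n1 y * u1n1 y i) x, fun ε => ?_⟩
      have hre : ∀ i : Fin 3,
          pd i (fun y => (1 + ε * ρ1n1 y + ε^2 * ρ2n1 y) * (u0n1 y i + ε * u1n1 y i)) x
            = pd i (fun y => u0n1 y i) x
              + ε * pd i (fun y => ρ1n1 y * u0n1 y i + u1n1 y i) x
              + ε^2 * pd i (fun y => ρ2n1 y * u0n1 y i + ρ1n1 y * u1n1 y i) x
              + ε^3 * pd i (fun y => ρ2n1 y * u1n1 y i) x := by
        intro i
        rw [show (fun y => (1 + ε * ρ1n1 y + ε^2 * ρ2n1 y) * (u0n1 y i + ε * u1n1 y i))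
            = (fun y => u0n1 y i + ε * (ρ1n1 y * u0n1 y i + u1n1 y i)
                + ε^2 * (ρ2n1 y * u0n1 y i + ρ1n1 y * u1n1 y i)
                + ε^3 * (ρ2n1 y * u1n1 y i)) from by funext y; ring]
        exact pd_expand4 _ _ _ _ _ _ _ (by fun_prop) (by fun_prop) (by fun_prop) (by fun_prop)
      rw [Finset.sum_congr rfl fun i _ => hre i, Finset.sum_add_distrib,
        Finset.sum_add_distrib, Finset.sum_add_distrib,
        ← Finset.mul_sum, ← Finset.mul_sum, ← Finset.mul_sum]
    set Φ : ℝ → ℝ := fun ε =>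
      ((1 + ε * ρ1n1 x + ε^2 * ρ2n1 x) - (1 + ε * ρ1n x + ε^2 * ρ2n x)) / Δt
        + ((∑ i, pd i (fun y => u0n1 y i) x) + ε * D1 + ε^2 * D2 + ε^3 * D3) with hΦdef
    have heq : ∀ᶠ ε in 𝓝[Set.Ioo (0:ℝ) ε₀] (0:ℝ), Φ ε = 0 := by
      filter_upwards [self_mem_nhdsWithin] with ε hε
      have H := hmass ε hε x
      rw [hD ε] at H
      exact H
    have hT : Tendsto Φ (𝓝[Set.Ioo (0:ℝ) ε₀] (0:ℝ))
        (𝓝 (∑ i, pd i (fun y => u0n1 y i) x)) := by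
      have hc : ContinuousAt Φ 0 := by fun_prop
      have h0 : Φ 0 = ∑ i, pd i (fun y => u0n1 y i) x := by simp [hΦdef]
      rw [← h0]
      exact hc.tendsto.mono_left hl_nhds
    have hz : Tendsto Φ (𝓝[Set.Ioo (0:ℝ) ε₀] (0:ℝ)) (𝓝 0) :=
      tendsto_const_nhds.congr' (by filter_upwards [heq] with ε h; exact h.symm)
    exact tendsto_nhds_unique hT hz
end
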